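/- arXiv:1805.03997 — 3 statements merged into one kernel-verified Lean document; each statement's English description precedes it below -/
import Mathlib

section
/- Equality holds in the bound Σ|γ_n|² ≤ ((β-α)²/(4π²))(π⁴/45 - Li₄(e^{-2πi(1-α)/(β-α)}) - Li₄(e^{2πi(1-α)/(β-α)})) for the function F_{α,β}(z) = z·exp(P̂_{α,β}(z)), whose logarithmic coefficients are γ_n = ((β-α)/(2πn²)) i (1 - e^{2πni(1-α)/(β-α)}). -/
open Complex Metric

/-- The polylogarithm of order 4, `Li₄(z) = Σ_{n≥1} zⁿ/n⁴`. -/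
noncomputable def Li4 (z : ℂ) : ℂ := ∑' n : ℕ, z ^ (n + 1) / ((n : ℂ) + 1) ^ 4

/-- The Taylor coefficients of `P̂_{α,β}`. -/
noncomputable def PhatCoeff (α β : ℝ) (n : ℕ) : ℂ :=
  (((β : ℂ) - α) / (Real.pi * (n : ℂ) ^ 2)) * Complex.I *
    (1 - Complex.exp (2 * Real.pi * (n : ℂ) * Complex.I * (1 - (α : ℂ)) / ((β : ℂ) - α)))

/-- `P̂_{α,β}(z) = Σ_{n≥1} ((β-α)/(πn²)) i (1 - e^{2πni(1-α)/(β-α)}) zⁿ`. -/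
noncomputable def Phat (α β : ℝ) (z : ℂ) : ℂ :=
  ∑' n : ℕ, PhatCoeff α β (n + 1) * z ^ (n + 1)

/-!
Near `0` the exponent `P̂_{α,β}(z)` is small, so `log (z exp P̂(z) / z) = P̂(z)` there and
uniqueness of power series expansions gives `2γ_n = P̂`'s `n`-th coefficient. Writing
`t = 2π(1-α)/(β-α)`, `|γ_n|² = ((β-α)/(2π))² (2 - 2 cos nt)/n⁴`, and summing with `ζ(4) = π⁴/90` and
`Re Li₄(e^{±it}) = Σ cos(nt)/n⁴` gives the value.
-/

open Filter Topology Real FormalMultilinearSeries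

theorem hasFPowerSeriesAt_ofScalars_iff {𝕜 : Type*} [NontriviallyNormedField 𝕜] {f : 𝕜 → 𝕜}
    {c : ℕ → 𝕜} :
    HasFPowerSeriesAt f (ofScalars 𝕜 c) 0 ↔ ∀ᶠ z in 𝓝 0, HasSum (fun n => c n * z ^ n) (f z) := by
  simp only [hasFPowerSeriesAt_iff, coeff_ofScalars, smul_eq_mul, zero_add, mul_comm]

theorem norm_one_sub_exp_ofReal_mul_I_le (x : ℝ) : ‖1 - cexp (x * I)‖ ≤ 2 :=
  (norm_sub_le _ _).trans (by rw [norm_one, norm_exp_ofReal_mul_I]; norm_num)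

theorem norm_one_sub_exp_ofReal_mul_I_sq (x : ℝ) :
    ‖1 - cexp (x * I)‖ ^ 2 = 2 - 2 * Real.cos x := by
  rw [Complex.sq_norm, normSq_apply]
  simp only [sub_re, sub_im, one_re, one_im, exp_ofReal_mul_I_re, exp_ofReal_mul_I_im]
  nlinarith [Real.sin_sq_add_cos_sq x]

theorem hasSum_one_div_succ_pow_four :
    HasSum (fun n : ℕ => 1 / ((n : ℝ) + 1) ^ 4) (π ^ 4 / 90) := by
  simpa using (hasSum_nat_add_iff' 1).mpr hasSum_zeta_four

theorem hasSum_re_Li4_exp_ofReal_mul_I (x : ℝ) :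
    HasSum (fun n : ℕ => Real.cos (x * (n + 1)) / ((n : ℝ) + 1) ^ 4) (Li4 (cexp (x * I))).re := by
  have hterm (n : ℕ) : cexp (x * I) ^ (n + 1) / ((n : ℂ) + 1) ^ 4 =
      ((1 / ((n : ℝ) + 1) ^ 4 : ℝ) : ℂ) * cexp ((x * (n + 1) : ℝ) * I) := by
    rw [← Complex.exp_nat_mul]; push_cast; ring_nf
  have hsummable : Summable fun n : ℕ => cexp (x * I) ^ (n + 1) / ((n : ℂ) + 1) ^ 4 := by
    refine Summable.of_norm (hasSum_one_div_succ_pow_four.summable.congr fun n => ?_)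
    rw [hterm, norm_mul, norm_exp_ofReal_mul_I, mul_one, norm_real,
      Real.norm_of_nonneg (by positivity)]
  refine (hsummable.hasSum.mapL reCLM).congr_fun fun n => ?_
  simp only [reCLM_apply, hterm, re_ofReal_mul, exp_ofReal_mul_I_re]
  ring

theorem hasSum_norm_sq_div_sq_mul_one_sub_exp (c t : ℝ) :
    HasSum (fun n : ℕ => ‖((c / ((n : ℝ) + 1) ^ 2 : ℝ) : ℂ) * I *
        (1 - cexp ((t * ((n : ℝ) + 1) : ℝ) * I))‖ ^ 2)
      (c ^ 2 * (π ^ 4 / 45 - (Li4 (cexp ((-t : ℝ) * I))).re - (Li4 (cexp (t * I))).re)) := by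
  rw [show π ^ 4 / 45 = 2 * (π ^ 4 / 90) by ring]
  refine ((((hasSum_one_div_succ_pow_four.mul_left 2).sub
    (hasSum_re_Li4_exp_ofReal_mul_I (-t))).sub (hasSum_re_Li4_exp_ofReal_mul_I t)).mul_left
      (c ^ 2)).congr_fun fun n => ?_
  rw [norm_mul, norm_mul, norm_I, mul_one, norm_real, mul_pow, Real.norm_eq_abs, sq_abs,
    norm_one_sub_exp_ofReal_mul_I_sq, neg_mul, Real.cos_neg]
  field_simp
  ring

section Phat

variable (α β : ℝ)

theorem phatCoeff_eq (n : ℕ) :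
    PhatCoeff α β n = (((β - α) / (π * n ^ 2) : ℝ) : ℂ) * I *
      (1 - cexp ((2 * π * (1 - α) / (β - α) * n : ℝ) * I)) := by
  rw [PhatCoeff]; push_cast; ring_nf

theorem norm_phatCoeff_le (n : ℕ) : ‖PhatCoeff α β n‖ ≤ 2 * |β - α| / π := by
  rcases n.eq_zero_or_pos with rfl | hn
  · simp [PhatCoeff]; positivity
  have hn2 : (1 : ℝ) ≤ (n : ℝ) ^ 2 := one_le_pow₀ (by exact_mod_cast hn)
  rw [phatCoeff_eq, norm_mul, norm_mul, norm_I, mul_one, norm_real, Real.norm_eq_abs, abs_div,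
    abs_of_pos (by positivity : 0 < π * n ^ 2)]
  calc |β - α| / (π * n ^ 2) * ‖1 - cexp _‖ ≤ |β - α| / π * 2 := by
        gcongr
        · exact le_mul_of_one_le_right Real.pi_pos.le hn2
        · exact norm_one_sub_exp_ofReal_mul_I_le _
    _ = 2 * |β - α| / π := by ring

theorem hasSum_phatCoeff_mul_pow {z : ℂ} (hz : ‖z‖ < 1) :
    HasSum (fun n => PhatCoeff α β n * z ^ n) (Phat α β z) := by
  have hs : Summable fun n => PhatCoeff α β n * z ^ n :=
    Summable.of_norm_bounded ((summable_geometric_of_lt_one (norm_nonneg z) hz).mul_left _)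
      fun n => by
        rw [norm_mul, norm_pow]
        exact mul_le_mul_of_nonneg_right (norm_phatCoeff_le α β n) (by positivity)
  refine (hasSum_nat_add_iff' 1).mp ?_
  simpa [Phat, PhatCoeff] using ((summable_nat_add_iff 1).mpr hs).hasSum

theorem hasFPowerSeriesAt_phat :
    HasFPowerSeriesAt (Phat α β) (ofScalars ℂ (PhatCoeff α β)) 0 :=
  hasFPowerSeriesAt_ofScalars_iff.mpr <| eventually_of_mem (ball_mem_nhds 0 one_pos)
    fun _ hz => hasSum_phatCoeff_mul_pow α β (mem_ball_zero_iff.mp hz)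

theorem phat_zero : Phat α β 0 = 0 := by
  simp [Phat]

theorem eventually_log_exp_phat : ∀ᶠ z in 𝓝 0, log (cexp (Phat α β z)) = Phat α β z := by
  have hsmall : ∀ᶠ z in 𝓝 (0 : ℂ), ‖Phat α β z‖ < π :=
    (hasFPowerSeriesAt_phat α β).continuousAt.norm.eventually
      (gt_mem_nhds (by simpa [phat_zero] using Real.pi_pos))
  filter_upwards [hsmall] with z hz
  obtain ⟨hlow, hhigh⟩ := abs_lt.mp ((abs_im_le_norm _).trans_lt hz)
  exact log_exp hlow hhigh.le

theorem two_mul_eq_phatCoeff_of_hasSum_log {γ : ℕ → ℂ}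
    (hγ : ∀ z ∈ ball (0 : ℂ) 1, z ≠ 0 →
      HasSum (fun n : ℕ => 2 * γ (n + 1) * z ^ (n + 1))
        (Complex.log ((z * Complex.exp (Phat α β z)) / z)))
    {n : ℕ} (hn : 1 ≤ n) : 2 * γ n = PhatCoeff α β n := by
  set c : ℕ → ℂ := fun n => if n = 0 then 0 else 2 * γ n
  suffices c = PhatCoeff α β by simpa [c, Nat.one_le_iff_ne_zero.mp hn] using congrFun this n
  have hc : HasFPowerSeriesAt (Phat α β) (ofScalars ℂ c) 0 := by
    refine hasFPowerSeriesAt_ofScalars_iff.mpr ?_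
    filter_upwards [eventually_log_exp_phat α β, ball_mem_nhds 0 one_pos] with z hlog hz
    refine (hasSum_nat_add_iff' 1).mp ?_
    rcases eq_or_ne z 0 with rfl | hz0
    · simp [c, phat_zero]
    · simpa [c, hlog, mul_div_cancel_left₀ _ hz0] using hγ z hz hz0
  exact (ofScalars_series_eq_iff ℂ c _).mp
    (hc.eq_formalMultilinearSeries (hasFPowerSeriesAt_phat α β))

end Phat

theorem logCoeff_extremal_S_alpha_beta_general (α β : ℝ)
    (γ : ℕ → ℂ)
    (hγ : ∀ z ∈ ball (0 : ℂ) 1, z ≠ 0 →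
      HasSum (fun n : ℕ => 2 * γ (n + 1) * z ^ (n + 1))
        (Complex.log ((z * Complex.exp (Phat α β z)) / z))) :
    (∀ n : ℕ, 1 ≤ n →
      γ n = (((β : ℂ) - α) / (2 * Real.pi * (n : ℂ) ^ 2)) * Complex.I *
        (1 - Complex.exp (2 * Real.pi * (n : ℂ) * Complex.I * (1 - (α : ℂ)) / ((β : ℂ) - α)))) ∧
    HasSum (fun n : ℕ => ‖γ (n + 1)‖ ^ 2)
      ((((((β : ℂ) - α) ^ 2) / (4 * (Real.pi : ℂ) ^ 2)) *
        ((Real.pi : ℂ) ^ 4 / 45 -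
          Li4 (Complex.exp (-2 * Real.pi * Complex.I * (1 - (α : ℂ)) / ((β : ℂ) - α))) -
          Li4 (Complex.exp (2 * Real.pi * Complex.I * (1 - (α : ℂ)) / ((β : ℂ) - α))))).re) := by
  have hcoeff (n : ℕ) (hn : 1 ≤ n) : γ n = PhatCoeff α β n / 2 := by
    linear_combination two_mul_eq_phatCoeff_of_hasSum_log α β hγ hn / 2
  refine ⟨fun n hn => by rw [hcoeff n hn, PhatCoeff]; ring, ?_⟩
  set c := (β - α) / (2 * π)
  set t := 2 * π * (1 - α) / (β - α)
  have hterm (n : ℕ) : γ (n + 1) =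
      ((c / ((n : ℝ) + 1) ^ 2 : ℝ) : ℂ) * I * (1 - cexp ((t * ((n : ℝ) + 1) : ℝ) * I)) := by
    rw [hcoeff (n + 1) n.succ_pos, phatCoeff_eq]
    push_cast [c, t]
    field_simp
  have hscale : ((β : ℂ) - α) ^ 2 / (4 * (π : ℂ) ^ 2) = ((c ^ 2 : ℝ) : ℂ) := by
    push_cast [c]; ring
  have hneg : -2 * π * I * (1 - (α : ℂ)) / ((β : ℂ) - α) = ((-t : ℝ) : ℂ) * I := by
    push_cast [t]; ring
  have hpos : 2 * π * I * (1 - (α : ℂ)) / ((β : ℂ) - α) = (t : ℂ) * I := by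
    push_cast [t]; ring
  rw [hscale, hneg, hpos, show (π : ℂ) ^ 4 / 45 = ((π ^ 4 / 45 : ℝ) : ℂ) by push_cast; ring,
    re_ofReal_mul, sub_re, sub_re, ofReal_re]
  simpa [hterm] using hasSum_norm_sq_div_sq_mul_one_sub_exp c t

/-- The extremal function `F_{α,β}(z) = z exp(P̂_{α,β}(z))` has logarithmic coefficients
`γ_n = ((β-α)/(2πn²)) i (1 - e^{2πni(1-α)/(β-α)})` and attains equality in the bound
`Σ |γ_n|² = ((β-α)²/(4π²))(π⁴/45 - Li₄(e^{-2πi(1-α)/(β-α)}) - Li₄(e^{2πi(1-α)/(β-α)}))`. -/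
theorem logCoeff_extremal_S_alpha_beta (α β : ℝ) (hα : α < 1) (hβ : 1 < β)
    (γ : ℕ → ℂ)
    (hγ : ∀ z ∈ ball (0 : ℂ) 1, z ≠ 0 →
      HasSum (fun n : ℕ => 2 * γ (n + 1) * z ^ (n + 1))
        (Complex.log ((z * Complex.exp (Phat α β z)) / z))) :
    (∀ n : ℕ, 1 ≤ n →
      γ n = (((β : ℂ) - α) / (2 * Real.pi * (n : ℂ) ^ 2)) * Complex.I *
        (1 - Complex.exp (2 * Real.pi * (n : ℂ) * Complex.I * (1 - (α : ℂ)) / ((β : ℂ) - α)))) ∧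
    HasSum (fun n : ℕ => ‖γ (n + 1)‖ ^ 2)
      ((((((β : ℂ) - α) ^ 2) / (4 * (Real.pi : ℂ) ^ 2)) *
        ((Real.pi : ℂ) ^ 4 / 45 -
          Li4 (Complex.exp (-2 * Real.pi * Complex.I * (1 - (α : ℂ)) / ((β : ℂ) - α))) -
          Li4 (Complex.exp (2 * Real.pi * Complex.I * (1 - (α : ℂ)) / ((β : ℂ) - α))))).re) :=
  logCoeff_extremal_S_alpha_beta_general α β γ hγ
end

section
/- The function F_δ(z) = z·exp(B̃_δ(z)), where B̃_δ(z) = Σ_{n≥1} ((-1)^{n-1} sin(nδ)/(n² sin δ)) zⁿ and π/2 ≤ δ < π, has logarithmic coefficients γ_n(F_δ) = (-1)^{n-1} sin(nδ)/(2n² sin δ), and these satisfy Σ_{n=1}^∞ |γ_n|² = (1/(16 sin² δ))(π⁴/45 - Li₄(e^{-2iδ}) - Li₄(e^{2iδ})). -/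
/-
Near `0` one has `‖B̃_δ z‖ ≤ ‖z‖ / (1 - ‖z‖) < π`, so `log (exp (B̃_δ z)) = B̃_δ z` there and
uniqueness of power-series coefficients identifies `2 γₙ` with the `n`-th coefficient of `B̃_δ`;
these coefficients have modulus at most `1` because `|sin nδ| ≤ n |sin δ|`.
Writing `sin² nδ = (1 - cos 2nδ) / 2`, the series `Σ |γₙ|²` splits into `ζ(4) = π⁴/90` and
`Σ cos (2nδ) / n⁴ = Re Li₄(e^{2iδ}) = Re Li₄(e^{-2iδ})`.
-/

open Complex Metric

/-- `B̃_δ(z) = Σ_{n≥1} ((-1)^{n-1} sin(nδ)/(n² sin δ)) zⁿ`. -/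
noncomputable def Btilde (δ : ℝ) (z : ℂ) : ℂ :=
  ∑' n : ℕ,
    (((-1 : ℝ) ^ n * Real.sin ((n + 1) * δ) / (((n : ℝ) + 1) ^ 2 * Real.sin δ) : ℝ) : ℂ) *
      z ^ (n + 1)

open Filter Topology

theorem abs_sin_nat_mul_le (n : ℕ) (x : ℝ) : |Real.sin (n * x)| ≤ n * |Real.sin x| := by
  induction n with
  | zero => simp
  | succ n ih =>
    push_cast
    rw [add_one_mul, Real.sin_add]
    calc |Real.sin (n * x) * Real.cos x + Real.cos (n * x) * Real.sin x|
        ≤ |Real.sin (n * x)| * |Real.cos x| + |Real.cos (n * x)| * |Real.sin x| :=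
          (abs_add_le _ _).trans_eq (by rw [abs_mul, abs_mul])
      _ ≤ n * |Real.sin x| * 1 + 1 * |Real.sin x| := by
          gcongr
          exacts [Real.abs_cos_le_one x, Real.abs_cos_le_one _]
      _ = (n + 1) * |Real.sin x| := by ring

theorem Complex.log_exp_of_norm_lt_pi {x : ℂ} (hx : ‖x‖ < Real.pi) : log (exp x) = x := by
  have him := abs_le.mp (abs_im_le_norm x)
  exact log_exp (by linarith) (by linarith)

theorem hasSum_pow_succ_of_lt_one {r : ℝ} (h₀ : 0 ≤ r) (h₁ : r < 1) :
    HasSum (fun n : ℕ => r ^ (n + 1)) (r / (1 - r)) := by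
  simpa only [pow_succ', div_eq_mul_inv] using (hasSum_geometric_of_lt_one h₀ h₁).mul_left r

theorem eq_of_eventually_hasSum_pow_succ {𝕜 : Type*} [NontriviallyNormedField 𝕜]
    {c b : ℕ → 𝕜} {f : 𝕜 → 𝕜}
    (hc : ∀ᶠ z in 𝓝 0, HasSum (fun n => c n * z ^ (n + 1)) (f z))
    (hb : ∀ᶠ z in 𝓝 0, HasSum (fun n => b n * z ^ (n + 1)) (f z)) : c = b := by
  have hasFPowerSeriesAt_shift : ∀ a : ℕ → 𝕜,
      (∀ᶠ z in 𝓝 0, HasSum (fun n => a n * z ^ (n + 1)) (f z)) →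
      HasFPowerSeriesAt f (FormalMultilinearSeries.ofScalars 𝕜 fun | 0 => 0 | n + 1 => a n) 0 := by
    intro a ha
    rw [hasFPowerSeriesAt_iff]
    filter_upwards [ha] with z hz
    have := HasSum.zero_add (f := fun n => z ^ n * (fun | 0 => 0 | n + 1 => a n) n)
      (by simpa only [mul_comm] using hz)
    simpa only [FormalMultilinearSeries.coeff_ofScalars, smul_eq_mul, mul_zero, zero_add] using this
  funext n
  have := congrArg (·.coeff (n + 1))
    ((hasFPowerSeriesAt_shift c hc).eq_formalMultilinearSeries (hasFPowerSeriesAt_shift b hb))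
  simpa only [FormalMultilinearSeries.coeff_ofScalars] using this

theorem hasSum_one_div_nat_add_one_pow_four :
    HasSum (fun n : ℕ => 1 / ((n : ℝ) + 1) ^ 4) (Real.pi ^ 4 / 90) := by
  simpa using (hasSum_nat_add_iff' 1).mpr hasSum_zeta_four

theorem hasSum_Li4 {z : ℂ} (hz : ‖z‖ ≤ 1) :
    HasSum (fun n : ℕ => z ^ (n + 1) / ((n : ℂ) + 1) ^ 4) (Li4 z) := by
  refine (Summable.of_norm_bounded hasSum_one_div_nat_add_one_pow_four.summable fun n => ?_).hasSum
  have hn : ‖(n : ℂ) + 1‖ = n + 1 := by exact_mod_cast Complex.norm_natCast (n + 1)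
  rw [norm_div, norm_pow, norm_pow, hn]
  gcongr
  exact pow_le_one₀ (norm_nonneg z) hz

theorem hasSum_cos_div_pow_four (θ : ℝ) :
    HasSum (fun n : ℕ => Real.cos ((n + 1) * θ) / ((n : ℝ) + 1) ^ 4) (Li4 (exp (θ * I))).re := by
  refine (Complex.hasSum_re (hasSum_Li4 (norm_exp_ofReal_mul_I θ).le)).congr_fun fun n => ?_
  have hpow : exp (θ * I) ^ (n + 1) = exp (((n + 1) * θ : ℝ) * I) := by
    rw [← Complex.exp_nat_mul]; push_cast; ring_nf
  have hden : ((n : ℂ) + 1) ^ 4 = (((n + 1) ^ 4 : ℝ) : ℂ) := by push_cast; rfl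
  rw [hpow, hden, div_ofReal_re, exp_ofReal_mul_I_re]

noncomputable def btildeCoeff (δ : ℝ) (n : ℕ) : ℝ :=
  (-1) ^ n * Real.sin ((n + 1) * δ) / (((n : ℝ) + 1) ^ 2 * Real.sin δ)

theorem abs_btildeCoeff_le_one (δ : ℝ) (n : ℕ) : |btildeCoeff δ n| ≤ 1 := by
  rcases eq_or_ne (Real.sin δ) 0 with hδ | hδ
  · simp [btildeCoeff, hδ]
  have hsin : |Real.sin ((n + 1) * δ)| ≤ (n + 1) * |Real.sin δ| := by
    exact_mod_cast abs_sin_nat_mul_le (n + 1) δ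
  rw [btildeCoeff, abs_div, div_le_one (by positivity), abs_mul, abs_mul, abs_pow, abs_neg,
    abs_one, one_pow, one_mul, abs_of_pos (by positivity : (0 : ℝ) < (n + 1) ^ 2)]
  calc |Real.sin ((n + 1) * δ)| ≤ (n + 1) * |Real.sin δ| := hsin
    _ ≤ (n + 1) ^ 2 * |Real.sin δ| := by gcongr; nlinarith

theorem norm_btildeCoeff_mul_pow_le (δ : ℝ) (n : ℕ) (z : ℂ) :
    ‖(btildeCoeff δ n : ℂ) * z ^ (n + 1)‖ ≤ ‖z‖ ^ (n + 1) := by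
  rw [norm_mul, norm_pow, norm_real, Real.norm_eq_abs]
  exact mul_le_of_le_one_left (by positivity) (abs_btildeCoeff_le_one δ n)

theorem hasSum_Btilde (δ : ℝ) {z : ℂ} (hz : ‖z‖ < 1) :
    HasSum (fun n : ℕ => (btildeCoeff δ n : ℂ) * z ^ (n + 1)) (Btilde δ z) :=
  (Summable.of_norm_bounded (hasSum_pow_succ_of_lt_one (norm_nonneg z) hz).summable
    (norm_btildeCoeff_mul_pow_le δ · z)).hasSum

theorem norm_Btilde_le (δ : ℝ) {z : ℂ} (hz : ‖z‖ < 1) : ‖Btilde δ z‖ ≤ ‖z‖ / (1 - ‖z‖) :=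
  tsum_of_norm_bounded (hasSum_pow_succ_of_lt_one (norm_nonneg z) hz)
    (norm_btildeCoeff_mul_pow_le δ · z)

theorem Btilde_zero (δ : ℝ) : Btilde δ 0 = 0 := by simp [Btilde]

theorem log_exp_Btilde (δ : ℝ) {z : ℂ} (hz : ‖z‖ < 1 / 2) :
    log (exp (Btilde δ z)) = Btilde δ z := by
  refine log_exp_of_norm_lt_pi ((norm_Btilde_le δ (by linarith)).trans_lt ?_)
  rw [div_lt_iff₀ (by linarith)]
  nlinarith [Real.pi_gt_three, norm_nonneg z]

theorem sq_btildeCoeff (δ : ℝ) (n : ℕ) :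
    btildeCoeff δ n ^ 2
      = (1 - Real.cos ((n + 1) * (2 * δ))) / (2 * ((n : ℝ) + 1) ^ 4 * Real.sin δ ^ 2) := by
  rw [btildeCoeff, div_pow, mul_pow, ← pow_mul, pow_mul', neg_one_sq, one_pow, one_mul,
    show (n + 1) * (2 * δ) = 2 * ((n + 1) * δ) by ring, Real.cos_two_mul, Real.cos_sq']
  generalize (n : ℝ) + 1 = k
  ring

theorem logCoeff_eq_btildeCoeff_div_two {δ : ℝ} {γ : ℕ → ℂ}
    (hγ : ∀ z ∈ ball (0 : ℂ) 1, z ≠ 0 →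
      HasSum (fun n : ℕ => 2 * γ (n + 1) * z ^ (n + 1)) (log ((z * exp (Btilde δ z)) / z)))
    (n : ℕ) : γ (n + 1) = (btildeCoeff δ n / 2 : ℝ) := by
  have hcoeff : (fun n => 2 * γ (n + 1)) = fun n => (btildeCoeff δ n : ℂ) := by
    refine eq_of_eventually_hasSum_pow_succ (f := Btilde δ) ?_ ?_
    · filter_upwards [ball_mem_nhds (0 : ℂ) (by norm_num : (0 : ℝ) < 1 / 2)] with z hz
      rw [mem_ball_zero_iff] at hz
      rcases eq_or_ne z 0 with rfl | hz0
      · simp [Btilde_zero]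
      · simpa only [mul_div_cancel_left₀ _ hz0, log_exp_Btilde δ hz] using
          hγ z (mem_ball_zero_iff.mpr (by linarith)) hz0
    · filter_upwards [ball_mem_nhds (0 : ℂ) one_pos] with z hz
      exact hasSum_Btilde δ (mem_ball_zero_iff.mp hz)
  push_cast
  linear_combination congrFun hcoeff n / 2

theorem hasSum_sq_btildeCoeff_div_two (δ : ℝ) :
    HasSum (fun n : ℕ => (btildeCoeff δ n / 2) ^ 2)
      ((1 / (16 * (Real.sin δ : ℂ) ^ 2)) *
        ((Real.pi : ℂ) ^ 4 / 45 - Li4 (exp (-2 * I * δ)) - Li4 (exp (2 * I * δ)))).re := by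
  have hsum := (((hasSum_one_div_nat_add_one_pow_four.mul_left 2).sub
    (hasSum_cos_div_pow_four (-(2 * δ)))).sub (hasSum_cos_div_pow_four (2 * δ))).mul_left
      (1 / (16 * Real.sin δ ^ 2))
  have hvalue : ((1 / (16 * (Real.sin δ : ℂ) ^ 2)) *
      ((Real.pi : ℂ) ^ 4 / 45 - Li4 (exp (-2 * I * δ)) - Li4 (exp (2 * I * δ)))).re
      = 1 / (16 * Real.sin δ ^ 2) * (2 * (Real.pi ^ 4 / 90)
        - (Li4 (exp ((-(2 * δ) : ℝ) * I))).re - (Li4 (exp ((2 * δ : ℝ) * I))).re) := by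
    rw [show -2 * I * δ = ((-(2 * δ) : ℝ) : ℂ) * I by push_cast; ring,
      show 2 * I * δ = ((2 * δ : ℝ) : ℂ) * I by push_cast; ring,
      show 1 / (16 * (Real.sin δ : ℂ) ^ 2) = ((1 / (16 * Real.sin δ ^ 2) : ℝ) : ℂ) by
        push_cast; rfl,
      re_ofReal_mul, sub_re, sub_re,
      show (Real.pi : ℂ) ^ 4 / 45 = ((Real.pi ^ 4 / 45 : ℝ) : ℂ) by push_cast; rfl, ofReal_re]
    ring
  rw [hvalue]
  refine hsum.congr_fun fun n => ?_
  rw [div_pow, sq_btildeCoeff, mul_neg, Real.cos_neg]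
  generalize (n : ℝ) + 1 = k
  ring

theorem logCoeff_extremal_M_delta_general (δ : ℝ) (γ : ℕ → ℂ)
    (hγ : ∀ z ∈ ball (0 : ℂ) 1, z ≠ 0 →
      HasSum (fun n : ℕ => 2 * γ (n + 1) * z ^ (n + 1))
        (Complex.log ((z * Complex.exp (Btilde δ z)) / z))) :
    (∀ n : ℕ, 1 ≤ n →
      γ n = (((-1 : ℝ) ^ (n - 1) * Real.sin (n * δ) / (2 * (n : ℝ) ^ 2 * Real.sin δ) : ℝ) : ℂ)) ∧
    HasSum (fun n : ℕ => ‖γ (n + 1)‖ ^ 2)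
      (((1 / (16 * (Real.sin δ : ℂ) ^ 2)) *
        ((Real.pi : ℂ) ^ 4 / 45 -
          Li4 (Complex.exp (-2 * Complex.I * δ)) -
          Li4 (Complex.exp (2 * Complex.I * δ)))).re) := by
  have hγ' := logCoeff_eq_btildeCoeff_div_two hγ
  refine ⟨fun n hn => ?_, ?_⟩
  · obtain ⟨m, rfl⟩ := Nat.exists_eq_add_of_le' hn
    rw [hγ', btildeCoeff, Nat.add_sub_cancel]
    congr 1
    push_cast
    generalize (m : ℝ) + 1 = k
    ring
  · simpa only [hγ', norm_real, Real.norm_eq_abs, sq_abs] using hasSum_sq_btildeCoeff_div_two δ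

/-- The extremal function `F_δ(z) = z exp(B̃_δ(z))` has logarithmic coefficients
`γ_n = (-1)^{n-1} sin(nδ)/(2n² sin δ)`, attaining equality
`Σ |γ_n|² = (1/(16 sin²δ))(π⁴/45 - Li₄(e^{-2iδ}) - Li₄(e^{2iδ}))`. -/
theorem logCoeff_extremal_M_delta (δ : ℝ) (hδ1 : Real.pi / 2 ≤ δ) (hδ2 : δ < Real.pi)
    (γ : ℕ → ℂ)
    (hγ : ∀ z ∈ ball (0 : ℂ) 1, z ≠ 0 →
      HasSum (fun n : ℕ => 2 * γ (n + 1) * z ^ (n + 1))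
        (Complex.log ((z * Complex.exp (Btilde δ z)) / z))) :
    (∀ n : ℕ, 1 ≤ n →
      γ n = (((-1 : ℝ) ^ (n - 1) * Real.sin (n * δ) / (2 * (n : ℝ) ^ 2 * Real.sin δ) : ℝ) : ℂ)) ∧
    HasSum (fun n : ℕ => ‖γ (n + 1)‖ ^ 2)
      (((1 / (16 * (Real.sin δ : ℂ) ^ 2)) *
        ((Real.pi : ℂ) ^ 4 / 45 -
          Li4 (Complex.exp (-2 * Complex.I * δ)) -
          Li4 (Complex.exp (2 * Complex.I * δ)))).re) :=
  logCoeff_extremal_M_delta_general δ γ hγ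
end

section
/- If f ∈ M(δ) with π/2 ≤ δ < π, then the logarithmic coefficients γ_n of f satisfy |γ_n| ≤ 1/(2n) for every n ≥ 1. -/
open Complex Metric

open Filter

private lemma hasSum_finsetSum {ι : Type*} (s : Finset ι) (F : ι → ℕ → ℂ) (S : ι → ℂ)
    (h : ∀ i ∈ s, HasSum (F i) (S i)) :
    HasSum (fun k => ∑ i ∈ s, F i k) (∑ i ∈ s, S i) := by
  classical
  induction s using Finset.induction_on with
  | empty => simpa using hasSum_zero
  | insert _ _ hx ih =>
    rename_i a t
    simp only [Finset.sum_insert hx]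
    exact (h a (Finset.mem_insert_self a t)).add
      (ih fun i hi => h i (Finset.mem_insert_of_mem hi))

/-- Termwise differentiation of a pointwise convergent power series on the unit ball. -/
private lemma tsum_pow_hasDerivAt (c : ℕ → ℂ)
    (hc : ∀ z ∈ ball (0:ℂ) 1, Summable (fun k => c k * z ^ k)) :
    ∀ z ∈ ball (0:ℂ) 1,
      HasDerivAt (fun w => ∑' (k : ℕ), c k * w ^ k)
        (∑' (k : ℕ), (k : ℂ) * c k * z ^ (k - 1)) z ∧
      Summable (fun k : ℕ => (k : ℂ) * c k * z ^ (k - 1)) := by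
  intro z hz
  rw [mem_ball_zero_iff] at hz
  obtain ⟨r, ρ, hzr, hrρ, hρ1, hr0⟩ :
      ∃ r ρ : ℝ, ‖z‖ < r ∧ r < ρ ∧ ρ < 1 ∧ 0 < r := by
    refine ⟨(‖z‖ + 1) / 2, ((‖z‖ + 1) / 2 + 1) / 2, by linarith, by linarith, by linarith,
      by have := norm_nonneg z; linarith⟩
  have hρ0 : 0 < ρ := lt_trans hr0 hrρ
  -- coefficients bound from summability at ρ
  have hsum : Summable (fun k => c k * (ρ:ℂ) ^ k) := by
    apply hc
    rw [mem_ball_zero_iff]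
    simpa [abs_of_pos hρ0] using hρ1
  have htend : Filter.Tendsto (fun k => ‖c k * (ρ:ℂ) ^ k‖) atTop (nhds 0) := by
    simpa using hsum.tendsto_atTop_zero.norm
  obtain ⟨C, hC⟩ : ∃ C, ∀ k, ‖c k‖ * ρ ^ k ≤ C := by
    obtain ⟨C, hC⟩ := htend.bddAbove_range
    refine ⟨C, fun k => ?_⟩
    have := hC (Set.mem_range_self k)
    simpa [norm_mul, norm_pow, abs_of_pos hρ0] using this
  have hCpos : 0 ≤ C := le_trans (by positivity) (hC 0)
  -- the dominating series
  set u : ℕ → ℝ := fun k => (C / r) * ((k:ℝ) * (r / ρ) ^ k) with hu_def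
  have hu : Summable u := by
    apply Summable.mul_left
    have hrρ' : ‖r / ρ‖ < 1 := by
      rw [Real.norm_eq_abs, abs_of_pos (by positivity)]
      rw [div_lt_one hρ0]; exact hrρ
    simpa using summable_pow_mul_geometric_of_norm_lt_one 1 hrρ'
  have hbound : ∀ k : ℕ, ∀ y : ℂ, y ∈ ball (0:ℂ) r → ‖(k:ℂ) * c k * y ^ (k-1)‖ ≤ u k := by
    intro k y hy
    rw [mem_ball_zero_iff] at hy
    rcases Nat.eq_zero_or_pos k with hk | hk
    · subst hk; simp [hu_def]
    · have h1 : ‖(k:ℂ) * c k * y ^ (k-1)‖ = (k:ℝ) * ‖c k‖ * ‖y‖ ^ (k-1) := by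
        simp [norm_mul, norm_pow]
      rw [h1]
      have h2 : ‖y‖ ^ (k-1) ≤ r ^ (k-1) := pow_le_pow_left₀ (norm_nonneg _) hy.le _
      have h3 : ‖c k‖ ≤ C / ρ ^ k := by
        rw [le_div_iff₀ (by positivity)]; exact hC k
      have h4 : (k:ℝ) * ‖c k‖ * ‖y‖ ^ (k-1) ≤ (k:ℝ) * (C / ρ ^ k) * r ^ (k-1) := by
        apply mul_le_mul
        · exact mul_le_mul_of_nonneg_left h3 (by positivity)
        · exact h2
        · positivity
        · positivity
      refine h4.trans (le_of_eq ?_)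
      rw [hu_def]
      obtain ⟨j, rfl⟩ : ∃ j, k = j + 1 := ⟨k - 1, (Nat.succ_pred_eq_of_pos hk).symm⟩
      simp only [Nat.add_sub_cancel]
      rw [div_pow, pow_succ]
      have hrne : r ≠ 0 := ne_of_gt hr0
      have hρne : ρ ≠ 0 := ne_of_gt hρ0
      field_simp
      ring
  have hz' : z ∈ ball (0:ℂ) r := by rwa [mem_ball_zero_iff]
  constructor
  · exact hasDerivAt_tsum_of_isPreconnected hu isOpen_ball
      ((convex_ball (0:ℂ) r).isPreconnected)
      (fun k y _ => by
        have := (hasDerivAt_pow k y).const_mul (c k)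
        exact this.congr_deriv (by ring))
      hbound (mem_ball_self hr0)
      (hc 0 (by simp)) hz'
  · exact Summable.of_norm_bounded hu (fun k => hbound k z hz')

private lemma strip_bound (δ : ℝ) (hs : 0 < Real.sin δ) (w : ℂ)
    (hw1 : (δ - Real.pi)/(2*Real.sin δ) < w.re) (hw2 : w.re < δ/(2*Real.sin δ)) :
    0 < (Complex.exp ((Real.pi - δ : ℝ)*I) * Complex.exp (((2*Real.sin δ : ℝ)*I) * w)).im ∧
    Complex.exp ((Real.pi - δ : ℝ)*I) * Complex.exp (((2*Real.sin δ : ℝ)*I) * w)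
      - (starRingEnd ℂ) (Complex.exp ((Real.pi - δ : ℝ)*I)) ≠ 0 ∧
    ‖Complex.exp ((Real.pi-δ:ℝ)*I) * Complex.exp (((2*Real.sin δ:ℝ)*I) * w)
      - Complex.exp ((Real.pi-δ:ℝ)*I)‖
      ≤ ‖Complex.exp ((Real.pi-δ:ℝ)*I) * Complex.exp (((2*Real.sin δ:ℝ)*I) * w)
      - (starRingEnd ℂ) (Complex.exp ((Real.pi-δ:ℝ)*I))‖ := by
  have hsne : (2*Real.sin δ) ≠ 0 := by positivity
  have e1 : 2*Real.sin δ * ((δ - Real.pi)/(2*Real.sin δ)) = δ - Real.pi :=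
    mul_div_cancel₀ _ hsne
  have e2 : 2*Real.sin δ * (δ/(2*Real.sin δ)) = δ := mul_div_cancel₀ _ hsne
  have l1 : δ - Real.pi < 2*Real.sin δ * w.re := by
    have := mul_lt_mul_of_pos_left hw1 (show (0:ℝ) < 2*Real.sin δ by positivity)
    rwa [e1] at this
  have l2 : 2*Real.sin δ * w.re < δ := by
    have := mul_lt_mul_of_pos_left hw2 (show (0:ℝ) < 2*Real.sin δ by positivity)
    rwa [e2] at this
  set a : ℂ := Complex.exp ((Real.pi - δ : ℝ)*I) with ha_def
  set ζ : ℂ := a * Complex.exp (((2*Real.sin δ : ℝ)*I) * w) with hζ_def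
  have hζ : ζ = Complex.exp ((Real.pi - δ : ℝ)*I + ((2*Real.sin δ : ℝ)*I) * w) := by
    rw [hζ_def, ha_def, ← Complex.exp_add]
  have hre : ((Real.pi - δ : ℝ)*I + ((2*Real.sin δ : ℝ)*I) * w).re
      = -(2*Real.sin δ) * w.im := by
    simp [Complex.add_re, Complex.mul_re, Complex.mul_im, -Complex.ofReal_sin]
  have him : ((Real.pi - δ : ℝ)*I + ((2*Real.sin δ : ℝ)*I) * w).im
      = (Real.pi - δ) + 2*Real.sin δ * w.re := by
    simp [Complex.add_im, Complex.mul_re, Complex.mul_im, -Complex.ofReal_sin]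
  have hζim : 0 < ζ.im := by
    rw [hζ, Complex.exp_im, hre, him]
    apply mul_pos (Real.exp_pos _)
    apply Real.sin_pos_of_pos_of_lt_pi <;> [linarith; linarith]
  have haim : a.im = Real.sin δ := by
    rw [ha_def, Complex.exp_im]
    simp [Real.sin_pi_sub]
  have hare : a.re = (Complex.exp ((Real.pi - δ : ℝ)*I)).re := by rw [ha_def]
  have haim0 : 0 < a.im := by rw [haim]; exact hs
  have hden : (ζ - (starRingEnd ℂ) a).im > 0 := by
    simp only [Complex.sub_im, Complex.conj_im]
    linarith
  refine ⟨hζim, ?_, ?_⟩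
  · intro h
    rw [h] at hden
    simp at hden
  · have h2 : ‖ζ - a‖^2 ≤ ‖ζ - (starRingEnd ℂ) a‖^2 := by
      rw [Complex.sq_norm, Complex.sq_norm,
        Complex.normSq_apply, Complex.normSq_apply]
      simp only [Complex.sub_re, Complex.sub_im, Complex.conj_re, Complex.conj_im]
      nlinarith [mul_pos hζim haim0]
    nlinarith [norm_nonneg (ζ - a), norm_nonneg (ζ - (starRingEnd ℂ) a), h2]

private noncomputable def Vfun (α : ℂ) : ℂ → ℂ :=
  fun w => if w = 0 then α else (Complex.exp (α*w) - 1)/w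

private lemma Vfun_diff (α : ℂ) : ∀ w : ℂ, DifferentiableAt ℂ (Vfun α) w := by
  have hne : ∀ w : ℂ, w ≠ 0 → DifferentiableAt ℂ (Vfun α) w := by
    intro w hw
    have hev : Vfun α =ᶠ[nhds w] fun u => (Complex.exp (α*u) - 1)/u := by
      filter_upwards [isOpen_compl_singleton.mem_nhds hw] with u hu
      exact if_neg hu
    have hdiff : DifferentiableAt ℂ (fun u => (Complex.exp (α*u) - 1)/u) w := by
      apply DifferentiableAt.div
      · exact ((differentiableAt_id.const_mul α).cexp).sub_const 1
      · exact differentiableAt_id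
      · exact hw
    exact hdiff.congr_of_eventuallyEq hev
  intro w
  rcases eq_or_ne w 0 with rfl | hw
  · -- removable singularity at 0
    have hd : ∀ᶠ u in nhdsWithin (0:ℂ) {(0:ℂ)}ᶜ, DifferentiableAt ℂ (Vfun α) u :=
      eventually_mem_nhdsWithin.mono (fun u hu => hne u hu)
    have H : HasDerivAt (fun w : ℂ => Complex.exp (α*w)) α 0 := by
      have h1 : HasDerivAt (fun w : ℂ => α * w) α 0 := by
        simpa using (hasDerivAt_id (0:ℂ)).const_mul α
      simpa using h1.cexp
    rw [hasDerivAt_iff_tendsto_slope] at H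
    have hT : Tendsto (Vfun α) (nhdsWithin (0:ℂ) {(0:ℂ)}ᶜ) (nhds α) := by
      apply H.congr'
      filter_upwards [eventually_mem_nhdsWithin] with u hu
      have hu' : u ≠ 0 := hu
      simp [slope_def_field, Vfun, if_neg hu', sub_zero]
    have hc : ContinuousAt (Vfun α) 0 := by
      rw [ContinuousAt, show Vfun α 0 = α from if_pos rfl,
        ← nhdsNE_sup_pure (0:ℂ), tendsto_sup]
      refine ⟨hT, ?_⟩
      have := tendsto_pure_nhds (Vfun α) 0
      simpa [Vfun] using this
    exact (Complex.analyticAt_of_differentiable_on_punctured_nhds_of_continuousAt hd hc).differentiableAt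
  · exact hne w hw

private lemma root_avg (n : ℕ) (hn : 1 ≤ n) (k : ℕ) :
    (n:ℂ)⁻¹ * ∑ j ∈ Finset.range n, (Complex.exp ((2*Real.pi/n : ℝ)*I) ^ k) ^ j
      = if n ∣ k then 1 else 0 := by
  have hn0 : (n:ℝ) ≠ 0 := Nat.cast_ne_zero.mpr (by omega)
  have hωn : Complex.exp ((2*Real.pi/n : ℝ)*I) ^ n = 1 := by
    rw [← Complex.exp_nat_mul]
    have hnc : (n:ℂ) ≠ 0 := by exact_mod_cast hn0
    have : (n:ℂ) * ((2*Real.pi/n : ℝ)*I) = (2*Real.pi : ℝ) * I := by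
      push_cast
      field_simp
    rw [this]
    simpa using Complex.exp_two_pi_mul_I
  have hωk : Complex.exp ((2*Real.pi/n : ℝ)*I) ^ k = Complex.exp ((2*Real.pi*k/n : ℝ)*I) := by
    rw [← Complex.exp_nat_mul]
    congr 1
    push_cast
    ring
  by_cases hdvd : n ∣ k
  · obtain ⟨t, rfl⟩ := hdvd
    have : Complex.exp ((2*Real.pi/n : ℝ)*I) ^ (n*t) = 1 := by
      rw [pow_mul, hωn, one_pow]
    rw [this]
    simp [Finset.sum_const]
    rw [inv_mul_cancel₀ (Nat.cast_ne_zero.mpr (by omega))]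
  · rw [if_neg hdvd]
    have hne1 : Complex.exp ((2*Real.pi/n : ℝ)*I) ^ k ≠ 1 := by
      rw [hωk]
      intro h
      rw [Complex.exp_eq_one_iff] at h
      obtain ⟨t, ht⟩ := h
      have him := congrArg Complex.im ht
      simp [Complex.mul_im] at him
      -- him : 2*π*k/n = t*(2*π)
      have hk : (k:ℝ) = t * n := by
        have h2 : (2*Real.pi) ≠ 0 := by positivity
        rw [div_eq_iff hn0] at him
        apply mul_left_cancel₀ h2
        linear_combination him
      have hkz : (k:ℤ) = t * n := by exact_mod_cast hk
      exact hdvd (Int.natCast_dvd_natCast.mp ⟨t, by rw [hkz]; ring⟩)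
    rw [geom_sum_eq hne1]
    rw [← pow_mul, mul_comm k n, pow_mul, hωn, one_pow]
    simp

open Complex Metric

/-- For `f ∈ M(δ)`, the logarithmic coefficients satisfy `|γ_n| ≤ 1/(2n)`. -/
theorem logCoeff_bound_M_delta (δ : ℝ) (hδ1 : Real.pi / 2 ≤ δ) (hδ2 : δ < Real.pi)
    (f : ℂ → ℂ) (hf : DifferentiableOn ℂ f (ball 0 1))
    (hf0 : f 0 = 0) (hf1 : deriv f 0 = 1)
    (hfz : ∀ z ∈ ball (0 : ℂ) 1, z ≠ 0 → f z ≠ 0)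
    (hM : ∀ z ∈ ball (0 : ℂ) 1, z ≠ 0 →
      1 + (δ - Real.pi) / (2 * Real.sin δ) < (z * deriv f z / f z).re ∧
      (z * deriv f z / f z).re < 1 + δ / (2 * Real.sin δ))
    (γ : ℕ → ℂ)
    (hγ : ∀ z ∈ ball (0 : ℂ) 1, z ≠ 0 →
      HasSum (fun n : ℕ => 2 * γ (n + 1) * z ^ (n + 1)) (Complex.log (f z / z))) :
    ∀ n : ℕ, 1 ≤ n → ‖γ n‖ ≤ 1 / (2 * n) := by
  intro n hn
  have hπ := Real.pi_pos
  have hs : 0 < Real.sin δ := Real.sin_pos_of_pos_of_lt_pi (by linarith) hδ2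
  have hnR : (0:ℝ) < n := by exact_mod_cast hn
  -- the Taylor coefficients of log (f z / z)
  set c : ℕ → ℂ := fun k => if k = 0 then 0 else 2 * γ k with hc_def
  have hchas : ∀ z ∈ ball (0:ℂ) 1, z ≠ 0 →
      HasSum (fun k => c k * z^k) (Complex.log (f z / z)) := by
    intro z hz hz0
    have h1 := hγ z hz hz0
    have he : (fun k : ℕ => c (k+1) * z^(k+1)) = (fun k : ℕ => 2 * γ (k+1) * z^(k+1)) := by
      funext k; simp [hc_def]
    rw [← he] at h1
    have h3 := (hasSum_nat_add_iff (f := fun k => c k * z^k) 1).mp h1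
    simpa [hc_def] using h3
  have hcs : ∀ z ∈ ball (0:ℂ) 1, Summable (fun k => c k * z^k) := by
    intro z hz
    rcases eq_or_ne z 0 with rfl | hz0
    · have : (fun k => c k * (0:ℂ)^k) = fun _ => 0 := by
        funext k; rcases k with _ | k <;> simp [hc_def]
      rw [this]; exact summable_zero
    · exact (hchas z hz hz0).summable
  set g : ℂ → ℂ := fun w => ∑' (k:ℕ), c k * w^k with hg_def
  set D : ℂ → ℂ := fun z => ∑' (k:ℕ), (k:ℂ) * c k * z^(k-1) with hD_def
  have hgderiv : ∀ z ∈ ball (0:ℂ) 1,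
      HasDerivAt g (D z) z ∧ Summable (fun k : ℕ => (k:ℂ)*c k*z^(k-1)) :=
    tsum_pow_hasDerivAt c hcs
  have hfg : ∀ z ∈ ball (0:ℂ) 1, f z = z * Complex.exp (g z) := by
    intro z hz
    rcases eq_or_ne z 0 with rfl | hz0
    · simp [hf0]
    · have : g z = Complex.log (f z / z) := (hchas z hz hz0).tsum_eq
      rw [this, Complex.exp_log (div_ne_zero (hfz z hz hz0) hz0)]
      field_simp
  have hgdiff : DifferentiableOn ℂ g (ball (0:ℂ) 1) := fun z hz =>
    ((hgderiv z hz).1.differentiableAt).differentiableWithinAt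
  have hdg : AnalyticOnNhd ℂ (deriv g) (ball (0:ℂ) 1) :=
    (hgdiff.analyticOnNhd isOpen_ball).deriv
  have hDg : ∀ z ∈ ball (0:ℂ) 1, deriv g z = D z := fun z hz => (hgderiv z hz).1.deriv
  set h : ℂ → ℂ := fun z => z * deriv g z with hh_def
  have hhdiff : ∀ z ∈ ball (0:ℂ) 1, DifferentiableAt ℂ h z := fun z hz =>
    differentiableAt_id.mul (hdg z hz).differentiableAt
  have hh0 : h 0 = 0 := by simp [hh_def]
  set A : ℕ → ℂ := fun k => (k:ℂ) * c k with hA_def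
  have hhsum : ∀ z ∈ ball (0:ℂ) 1, HasSum (fun k : ℕ => A k * z^k) (h z) := by
    intro z hz
    have h1 := ((hgderiv z hz).2.hasSum).mul_left z
    have he : (fun k : ℕ => z * ((k:ℂ)*c k*z^(k-1))) = fun k : ℕ => A k * z^k := by
      funext k
      rcases k with _ | k
      · simp [hA_def]
      · simp only [hA_def, Nat.add_sub_cancel]
        ring
    rw [he] at h1
    have : h z = z * D z := by simp only [hh_def]; rw [hDg z hz]
    rw [this]
    exact h1
  -- real part bounds for h
  have hhRe : ∀ z ∈ ball (0:ℂ) 1,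
      (δ - Real.pi)/(2*Real.sin δ) < (h z).re ∧ (h z).re < δ/(2*Real.sin δ) := by
    intro z hz
    rcases eq_or_ne z 0 with rfl | hz0
    · rw [hh0]
      constructor
      · simpa using div_neg_of_neg_of_pos (by linarith) (by positivity)
      · simpa using div_pos (by linarith) (by positivity)
    · have hDz := (hgderiv z hz).1
      have hexp : HasDerivAt (fun w => w * Complex.exp (g w))
          (Complex.exp (g z) + z * (Complex.exp (g z) * D z)) z := by
        have := (hasDerivAt_id z).mul (hDz.cexp)
        exact this.congr_deriv (by simp)
      have hfd : HasDerivAt f (Complex.exp (g z) + z * (Complex.exp (g z) * D z)) z := by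
        apply hexp.congr_of_eventuallyEq
        filter_upwards [isOpen_ball.mem_nhds hz] with w hw
        exact hfg w hw
      have hval : z * deriv f z / f z = 1 + h z := by
        rw [hfd.deriv, hfg z hz]
        have h2 : h z = z * D z := by simp only [hh_def]; rw [hDg z hz]
        rw [h2]
        have hez := Complex.exp_ne_zero (g z)
        field_simp
      have hb := hM z hz hz0
      rw [hval] at hb
      simp only [Complex.add_re, Complex.one_re] at hb
      exact ⟨by linarith [hb.1], by linarith [hb.2]⟩
  -- roots of unity averaging
  set ω : ℂ := Complex.exp ((2*Real.pi/n : ℝ)*I) with hω_def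
  have hωnorm : ∀ j : ℕ, ‖ω^j‖ = 1 := by
    intro j
    rw [norm_pow, hω_def, Complex.norm_exp_ofReal_mul_I, one_pow]
  have hωball : ∀ (j : ℕ) (ζ : ℂ), ζ ∈ ball (0:ℂ) 1 → ω^j * ζ ∈ ball (0:ℂ) 1 := by
    intro j ζ hζ
    rw [mem_ball_zero_iff] at hζ ⊢
    rw [norm_mul, hωnorm j, one_mul]
    exact hζ
  set Q : ℂ → ℂ := fun ζ => (n:ℂ)⁻¹ * ∑ j ∈ Finset.range n, h (ω^j * ζ) with hQ_def
  have hQsum : ∀ ζ ∈ ball (0:ℂ) 1,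
      HasSum (fun k => (if n ∣ k then (1:ℂ) else 0) * (A k * ζ^k)) (Q ζ) := by
    intro ζ hζ
    have h1 := hasSum_finsetSum (Finset.range n) (fun j k => A k * (ω^j*ζ)^k)
      (fun j => h (ω^j*ζ)) (fun j _ => hhsum _ (hωball j ζ hζ))
    have h2 := h1.mul_left (n:ℂ)⁻¹
    have he : (fun k => (n:ℂ)⁻¹ * ∑ j ∈ Finset.range n, A k * (ω^j*ζ)^k)
        = fun k => (if n ∣ k then (1:ℂ) else 0) * (A k * ζ^k) := by
      funext k
      have hsum : ∑ j ∈ Finset.range n, A k * (ω^j*ζ)^k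
          = (∑ j ∈ Finset.range n, (ω^k)^j) * (A k * ζ^k) := by
        rw [Finset.sum_mul]
        apply Finset.sum_congr rfl
        intro j _
        rw [mul_pow, pow_right_comm]
        ring
      rw [hsum, ← mul_assoc, root_avg n hn k]
    rw [he] at h2
    exact h2
  set b : ℕ → ℂ := fun j => A (n*(j+1)) with hb_def
  have hQ2 : ∀ ζ ∈ ball (0:ℂ) 1, HasSum (fun j => ζ^n * (b j * (ζ^n)^j)) (Q ζ) := by
    intro ζ hζ
    have he_inj : Function.Injective (fun j => n*(j+1)) := by
      intro x y hxy
      simp only at hxy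
      have := Nat.eq_of_mul_eq_mul_left (show 0 < n by omega) hxy
      omega
    have hvanish : ∀ k ∉ Set.range (fun j => n*(j+1)),
        (if n ∣ k then (1:ℂ) else 0) * (A k * ζ^k) = 0 := by
      intro k hk
      by_cases hd : n ∣ k
      · obtain ⟨t, rfl⟩ := hd
        rcases t with _ | t
        · simp [hA_def]
        · exact absurd ⟨t, rfl⟩ hk
      · simp [hd]
    have h3 := (he_inj.hasSum_iff hvanish).mpr (hQsum ζ hζ)
    have he : ((fun k => (if n ∣ k then (1:ℂ) else 0) * (A k * ζ^k)) ∘ (fun j => n*(j+1)))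
        = fun j => ζ^n * (b j * (ζ^n)^j) := by
      funext j
      simp only [Function.comp_apply, hb_def]
      rw [if_pos ⟨j+1, rfl⟩, one_mul]
      rw [show n*(j+1) = n + n*j from by ring, pow_add, pow_mul]
      ring
    rw [he] at h3
    exact h3
  have hsurj : ∀ w ∈ ball (0:ℂ) 1, ∃ ζ : ℂ, ζ ∈ ball (0:ℂ) 1 ∧ ζ^n = w := by
    intro w hw
    rcases eq_or_ne w 0 with rfl | hw0
    · exact ⟨0, by simp, by rw [zero_pow (by omega)]⟩
    · refine ⟨w ^ (Complex.ofReal ((n:ℝ)⁻¹)), ?_, ?_⟩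
      · rw [mem_ball_zero_iff] at hw ⊢
        rw [Complex.norm_cpow_real]
        exact Real.rpow_lt_one (norm_nonneg _)
          hw (by positivity)
      · have : (Complex.ofReal ((n:ℝ)⁻¹)) = ((n:ℂ))⁻¹ := by push_cast; ring
        rw [this]
        exact Complex.cpow_nat_inv_pow w (by omega)
  have hRsum : ∀ w ∈ ball (0:ℂ) 1, Summable (fun j => b j * w^j) := by
    intro w hw
    rcases eq_or_ne w 0 with rfl | hw0
    · apply summable_of_ne_finset_zero (s := {0})
      intro j hj
      simp only [Finset.mem_singleton] at hj
      rw [zero_pow hj, mul_zero]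
    · obtain ⟨ζ, hζ, rfl⟩ := hsurj w hw
      have hζ0 : ζ ≠ 0 := by
        intro hζ0
        apply hw0
        rw [hζ0, zero_pow (by omega)]
      have h4 := (hQ2 ζ hζ).mul_left ((ζ^n)⁻¹)
      have he : (fun j => (ζ^n)⁻¹ * (ζ^n * (b j * (ζ^n)^j))) = fun j => b j * (ζ^n)^j := by
        funext j
        rw [inv_mul_cancel_left₀ (pow_ne_zero n hζ0)]
      rw [he] at h4
      exact h4.summable
  set R : ℂ → ℂ := fun w => ∑' (j:ℕ), b j * w^j with hR_def
  have hQR : ∀ ζ ∈ ball (0:ℂ) 1, Q ζ = ζ^n * R (ζ^n) := by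
    intro ζ hζ
    have hζ' : ‖ζ‖ < 1 := mem_ball_zero_iff.mp hζ
    have hζn : ζ^n ∈ ball (0:ℂ) 1 := by
      rw [mem_ball_zero_iff, norm_pow]
      exact pow_lt_one₀ (norm_nonneg ζ) hζ' (by omega)
    exact (hQ2 ζ hζ).unique (((hRsum _ hζn).hasSum).mul_left (ζ^n))
  have hR0 : R 0 = A n := by
    rw [hR_def]
    simp only
    rw [tsum_eq_single 0 (fun j hj => by rw [zero_pow hj, mul_zero])]
    simp [hb_def]
  have hRdiff : ∀ w ∈ ball (0:ℂ) 1, DifferentiableAt ℂ R w := fun w hw =>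
    ((tsum_pow_hasDerivAt b hRsum) w hw).1.differentiableAt
  -- strip geometry
  set α : ℂ := ((2*Real.sin δ : ℝ) : ℂ) * I with hα_def
  set aC : ℂ := Complex.exp ((Real.pi - δ : ℝ)*I) with haC_def
  set U : ℂ → ℂ := fun w => aC * Vfun α w / (aC * Complex.exp (α*w) - (starRingEnd ℂ) aC)
    with hU_def
  have hQre : ∀ ζ ∈ ball (0:ℂ) 1,
      (δ - Real.pi)/(2*Real.sin δ) < (Q ζ).re ∧ (Q ζ).re < δ/(2*Real.sin δ) := by
    intro ζ hζ
    have hinv : ((n:ℂ)⁻¹ : ℂ) = (((n:ℝ)⁻¹ : ℝ) : ℂ) := by push_cast; ring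
    have hre : (Q ζ).re = (n:ℝ)⁻¹ * ∑ j ∈ Finset.range n, (h (ω^j * ζ)).re := by
      rw [hQ_def]
      simp only
      rw [hinv, Complex.re_ofReal_mul, Complex.re_sum]
    have hlow : (n:ℝ) * ((δ - Real.pi)/(2*Real.sin δ))
        < ∑ j ∈ Finset.range n, (h (ω^j * ζ)).re := by
      calc (n:ℝ) * ((δ - Real.pi)/(2*Real.sin δ))
          = ∑ _j ∈ Finset.range n, ((δ - Real.pi)/(2*Real.sin δ)) := by
            rw [Finset.sum_const, Finset.card_range, nsmul_eq_mul]
        _ < _ := Finset.sum_lt_sum_of_nonempty (by simp; omega)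
            (fun j _ => (hhRe _ (hωball j ζ hζ)).1)
    have hhigh : ∑ j ∈ Finset.range n, (h (ω^j * ζ)).re
        < (n:ℝ) * (δ/(2*Real.sin δ)) := by
      calc ∑ j ∈ Finset.range n, (h (ω^j * ζ)).re
          < ∑ _j ∈ Finset.range n, (δ/(2*Real.sin δ)) := Finset.sum_lt_sum_of_nonempty
            (by simp; omega) (fun j _ => (hhRe _ (hωball j ζ hζ)).2)
        _ = (n:ℝ) * (δ/(2*Real.sin δ)) := by
            rw [Finset.sum_const, Finset.card_range, nsmul_eq_mul]
    constructor
    · rw [hre]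
      have := mul_lt_mul_of_pos_left hlow (show (0:ℝ) < (n:ℝ)⁻¹ by positivity)
      rwa [← mul_assoc, inv_mul_cancel₀ (ne_of_gt hnR), one_mul] at this
    · rw [hre]
      have := mul_lt_mul_of_pos_left hhigh (show (0:ℝ) < (n:ℝ)⁻¹ by positivity)
      rwa [← mul_assoc, inv_mul_cancel₀ (ne_of_gt hnR), one_mul] at this
  have hUdiffat : ∀ w : ℂ, (δ - Real.pi)/(2*Real.sin δ) < w.re → w.re < δ/(2*Real.sin δ) →
      DifferentiableAt ℂ U w := by
    intro w h1 h2
    have hden := (strip_bound δ hs w h1 h2).2.1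
    apply DifferentiableAt.div
    · exact (Vfun_diff α w).const_mul aC
    · exact (((differentiableAt_id.const_mul α).cexp).const_mul aC).sub_const _
    · exact hden
  have hQdiff : ∀ ζ ∈ ball (0:ℂ) 1, DifferentiableAt ℂ Q ζ := by
    intro ζ hζ
    apply DifferentiableAt.const_mul
    apply DifferentiableAt.fun_sum
    intro j _
    exact (hhdiff _ (hωball j ζ hζ)).comp ζ (differentiableAt_id.const_mul (ω^j))
  set ρ : ℂ → ℂ := fun ζ => U (Q ζ) * R (ζ^n) with hρ_def
  have hρdiff : DifferentiableOn ℂ ρ (ball (0:ℂ) 1) := by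
    intro ζ hζ
    apply DifferentiableAt.differentiableWithinAt
    have hζn : ζ^n ∈ ball (0:ℂ) 1 := by
      rw [mem_ball_zero_iff, norm_pow]
      exact pow_lt_one₀ (norm_nonneg ζ) (mem_ball_zero_iff.mp hζ) (by omega)
    exact ((hUdiffat (Q ζ) (hQre ζ hζ).1 (hQre ζ hζ).2).comp ζ (hQdiff ζ hζ)).mul
      ((hRdiff _ hζn).comp ζ (differentiableAt_pow n))
  have hwU : ∀ w : ℂ, w * U w
      = (aC * Complex.exp (α*w) - aC) / (aC * Complex.exp (α*w) - (starRingEnd ℂ) aC) := by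
    intro w
    rcases eq_or_ne w 0 with rfl | hw0
    · simp [hU_def]
    · rw [hU_def]
      simp only
      simp only [Vfun, if_neg hw0]
      rw [show aC * ((Complex.exp (α*w) - 1)/w) = (aC*Complex.exp (α*w) - aC)/w from by
        rw [mul_div_assoc']; ring_nf]
      rw [div_div, mul_div_assoc']
      exact mul_div_mul_left _ _ hw0
  have hkey : ∀ ζ ∈ ball (0:ℂ) 1, ζ^n * ρ ζ
      = (aC * Complex.exp (α * Q ζ) - aC) / (aC * Complex.exp (α * Q ζ) - (starRingEnd ℂ) aC) := by
    intro ζ hζ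
    rw [hρ_def]
    simp only
    rw [show ζ^n * (U (Q ζ) * R (ζ^n)) = (ζ^n * R (ζ^n)) * U (Q ζ) from by ring,
      ← hQR ζ hζ, hwU (Q ζ)]
  have hρball : ∀ r : ℝ, 0 < r → r < 1 → ‖ρ 0‖ ≤ (r^n)⁻¹ := by
    intro r hr0 hr1
    have hdc : DiffContOnCl ℂ ρ (ball (0:ℂ) r) := by
      constructor
      · exact hρdiff.mono (ball_subset_ball hr1.le)
      · apply hρdiff.continuousOn.mono
        rw [closure_ball (0:ℂ) (ne_of_gt hr0)]
        exact closedBall_subset_ball hr1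
    apply Complex.norm_le_of_forall_mem_frontier_norm_le (isBounded_ball) hdc
    · intro ζ hζ
      rw [frontier_ball (0:ℂ) (ne_of_gt hr0)] at hζ
      have hζr : ‖ζ‖ = r := by rwa [mem_sphere_zero_iff_norm] at hζ
      have hζ1 : ζ ∈ ball (0:ℂ) 1 := by rw [mem_ball_zero_iff, hζr]; exact hr1
      have hb := strip_bound δ hs (Q ζ) (hQre ζ hζ1).1 (hQre ζ hζ1).2
      have hquot : ‖(aC * Complex.exp (α * Q ζ) - aC)
          / (aC * Complex.exp (α * Q ζ) - (starRingEnd ℂ) aC)‖ ≤ 1 := by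
        rw [norm_div]
        apply div_le_one_of_le₀ hb.2.2 (norm_nonneg _)
      have h5 : ‖ζ^n * ρ ζ‖ ≤ 1 := by rw [hkey ζ hζ1]; exact hquot
      rw [norm_mul, norm_pow, hζr] at h5
      rw [← one_div, le_div_iff₀ (by positivity)]
      linarith [h5]
    · exact subset_closure (mem_ball_self hr0)
  have hρ0le : ‖ρ 0‖ ≤ 1 := by
    have hcont : ContinuousAt (fun r : ℝ => (r^n)⁻¹) 1 :=
      ((continuous_pow n).continuousAt).inv₀ (by norm_num)
    have hlim : Tendsto (fun r : ℝ => (r^n)⁻¹) (nhdsWithin 1 (Set.Iio 1)) (nhds 1) := by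
      have := hcont.tendsto.mono_left
        (nhdsWithin_le_nhds : nhdsWithin (1:ℝ) (Set.Iio 1) ≤ nhds 1)
      simpa using this
    apply ge_of_tendsto hlim
    filter_upwards [Ioo_mem_nhdsLT_of_mem (show (1:ℝ) ∈ Set.Ioc 0 1 by norm_num)] with r hr
    exact hρball r hr.1 hr.2
  -- compute ρ 0
  have hQ0 : Q 0 = 0 := by
    rw [hQ_def]
    simp [hh_def]
  have haCim : aC.im = Real.sin δ := by
    rw [haC_def, Complex.exp_im]
    simp [Real.sin_pi_sub]
  have hU0 : U 0 = aC := by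
    rw [hU_def]
    simp only [mul_zero, Complex.exp_zero, mul_one]
    rw [show Vfun α 0 = α from if_pos rfl]
    rw [Complex.sub_conj, haCim, hα_def]
    rw [mul_div_assoc, div_self (by
      apply mul_ne_zero
      · norm_cast
        positivity
      · exact Complex.I_ne_zero), mul_one]
  have hρ0 : ρ 0 = aC * A n := by
    rw [hρ_def]
    simp only
    rw [hQ0, hU0, zero_pow (by omega : n ≠ 0), hR0]
  have haCnorm : ‖aC‖ = 1 := by
    rw [haC_def, Complex.norm_exp_ofReal_mul_I]
  have hAn : ‖A n‖ = (n:ℝ) * (2 * ‖γ n‖) := by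
    rw [hA_def]
    simp only
    rw [hc_def]
    simp only [if_neg (by omega : n ≠ 0)]
    rw [norm_mul, norm_mul]
    simp [Complex.norm_natCast]
  have hfin : (n:ℝ) * (2 * ‖γ n‖) ≤ 1 := by
    have : ‖ρ 0‖ = (n:ℝ) * (2 * ‖γ n‖) := by
      rw [hρ0, norm_mul, haCnorm, one_mul, hAn]
    linarith [hρ0le, this.symm.le, this.le]
  rw [le_div_iff₀ (by positivity)]
  calc ‖γ n‖ * (2 * n) = (n:ℝ) * (2 * ‖γ n‖) := by ring
    _ ≤ 1 := hfin
end
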